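/- The Lie superalgebra N_{2,m} (m odd, m ≥ 3) with even part spanned by e₁, e₂, odd part spanned by y₁,…,y_m, and products [y_i,e₁] = -[e₁,y_i] = y_{i+1} (1 ≤ i ≤ m-1), [y_{m+1-i},y_i] = (-1)^{i+1}e₂ (1 ≤ i ≤ (m+1)/2, extended by graded symmetry on odd pairs) is nilpotent of nilindex exactly m+2, i.e., the descending central series N¹ = N, N^{k+1} = [N^k, N] satisfies N^{m+2} = 0 and N^{m+1} ≠ 0. -/

import Mathlib

/-! With `F n = span {e₂, y_{n+1}, …, y_m}`, every left bracket kills `e₂`, `[y_j, ·]` lands in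
`F j` and `[e₁, ·]` in `F 1`; hence `N^{k+1} ⊆ F k` for `k ≥ 1`, and
`N^{m+2} ⊆ [F m, N] = 0`. Conversely `y_{k+1} = [y_k, e₁]` puts `y_k` in `N^k`, so the nonzero
vector `e₂ = [y_m, y₁]` lies in `N^{m+1}`. -/

/-- The lower central series N¹ = N, N^{k+1} = [N^k, N]: here `leibLCS br k`
corresponds to N^{k+1}. -/
def leibLCS {V : Type*} [AddCommGroup V] [Module ℂ V]
    (br : V →ₗ[ℂ] V →ₗ[ℂ] V) : ℕ → Submodule ℂ V
  | 0 => ⊤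
  | k + 1 => Submodule.span ℂ {z | ∃ a ∈ leibLCS br k, ∃ b : V, z = br a b}

theorem LinearMap.apply_apply_mem_of_mem_span {R M N P : Type*} [CommSemiring R]
    [AddCommMonoid M] [AddCommMonoid N] [AddCommMonoid P] [Module R M] [Module R N] [Module R P]
    (f : M →ₗ[R] N →ₗ[R] P) {s : Set M} {t : Set N} {p : Submodule R P}
    (h : ∀ x ∈ s, ∀ y ∈ t, f x y ∈ p) {a : M} {b : N}
    (ha : a ∈ Submodule.span R s) (hb : b ∈ Submodule.span R t) : f a b ∈ p := by
  have hab := Submodule.apply_mem_map₂ f ha hb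
  rw [Submodule.map₂_span_span] at hab
  refine Submodule.span_le.mpr ?_ hab
  rintro _ ⟨x, hx, y, hy, rfl⟩
  exact h x hx y hy

section LeibLCS

variable {V : Type*} [AddCommGroup V] [Module ℂ V] {br : V →ₗ[ℂ] V →ₗ[ℂ] V}

theorem leibLCS_succ_le_iff {k : ℕ} {p : Submodule ℂ V} :
    leibLCS br (k + 1) ≤ p ↔ ∀ a ∈ leibLCS br k, ∀ b, br a b ∈ p := by
  refine Submodule.span_le.trans ⟨fun h a ha b => h ⟨a, ha, b, rfl⟩, ?_⟩
  rintro h _ ⟨a, ha, b, rfl⟩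
  exact h a ha b

theorem apply_mem_leibLCS_succ {k : ℕ} {a : V} (ha : a ∈ leibLCS br k) (b : V) :
    br a b ∈ leibLCS br (k + 1) :=
  Submodule.subset_span ⟨a, ha, b, rfl⟩

theorem leibLCS_succ_le_of_filtration (F : ℕ → Submodule ℂ V)
    (hF₁ : ∀ a b, br a b ∈ F 1) (hF : ∀ n a b, a ∈ F n → br a b ∈ F (n + 1)) :
    ∀ k, leibLCS br (k + 1) ≤ F (k + 1)
  | 0 => leibLCS_succ_le_iff.mpr fun a _ b => hF₁ a b
  | k + 1 => leibLCS_succ_le_iff.mpr fun a ha b =>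
      hF _ a b (leibLCS_succ_le_of_filtration F hF₁ hF k ha)

end LeibLCS

namespace N2m

variable {V : Type*} [AddCommGroup V] [Module ℂ V] {m : ℕ} {eN yN : ℕ → V}
  {br : V →ₗ[ℂ] V →ₗ[ℂ] V}

def generators (m : ℕ) (eN yN : ℕ → V) : Set V :=
  insert (eN 1) (insert (eN 2) (yN '' Set.Icc 1 m))

def filtration (eN yN : ℕ → V) (n : ℕ) : Submodule ℂ V :=
  Submodule.span ℂ (insert (eN 2) (yN '' Set.Ioi n))

theorem eN_two_mem_filtration (n : ℕ) : eN 2 ∈ filtration eN yN n :=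
  Submodule.subset_span (Set.mem_insert _ _)

theorem yN_mem_filtration {n j : ℕ} (h : n < j) : yN j ∈ filtration eN yN n :=
  Submodule.subset_span (Set.mem_insert_of_mem _ ⟨j, h, rfl⟩)

theorem filtration_anti {n n' : ℕ} (h : n ≤ n') :
    filtration eN yN n' ≤ filtration eN yN n :=
  Submodule.span_mono (Set.insert_subset_insert (Set.image_mono (Set.Ioi_subset_Ioi h)))

theorem span_generators_eq_top (bas : Module.Basis (Fin 2 ⊕ Fin m) ℂ V)
    (he₁ : bas (Sum.inl 0) = eN 1) (he₂ : bas (Sum.inl 1) = eN 2)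
    (hy : ∀ j : Fin m, bas (Sum.inr j) = yN (j + 1)) :
    Submodule.span ℂ (generators m eN yN) = ⊤ := by
  refine eq_top_iff.mpr (bas.span_eq ▸ Submodule.span_mono ?_)
  rintro _ ⟨i | j, rfl⟩
  · fin_cases i
    · exact .inl he₁
    · exact .inr (.inl he₂)
  · exact .inr (.inr ⟨j + 1, ⟨by omega, by omega⟩, (hy j).symm⟩)

theorem apply_mem_of_generators (hspan : Submodule.span ℂ (generators m eN yN) = ⊤)
    {a : V} {p : Submodule ℂ V} (h : ∀ x ∈ generators m eN yN, br a x ∈ p) (b : V) :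
    br a b ∈ p :=
  br.apply_apply_mem_of_mem_span (s := {a}) (by simpa using h)
    (Submodule.mem_span_singleton_self a) (hspan ▸ Submodule.mem_top)

theorem apply_eN_two_eq_zero (hspan : Submodule.span ℂ (generators m eN yN) = ⊤)
    (hee : ∀ i j, 1 ≤ i → i ≤ 2 → 1 ≤ j → j ≤ 2 → br (eN i) (eN j) = 0)
    (hey : ∀ i j, 1 ≤ i → i ≤ 2 → 1 ≤ j → j ≤ m →
      br (eN i) (yN j) = if i = 1 then -yN (j + 1) else 0) (b : V) :
    br (eN 2) b = 0 := by
  rw [← Submodule.mem_bot ℂ]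
  refine apply_mem_of_generators hspan ?_ b
  rintro _ (rfl | rfl | ⟨j, ⟨hj1, hjm⟩, rfl⟩)
  · simp [hee 2 1]
  · simp [hee 2 2]
  · simp [hey 2 j, hj1, hjm]

theorem apply_eN_one_mem_filtration (hspan : Submodule.span ℂ (generators m eN yN) = ⊤)
    (hee : ∀ i j, 1 ≤ i → i ≤ 2 → 1 ≤ j → j ≤ 2 → br (eN i) (eN j) = 0)
    (hey : ∀ i j, 1 ≤ i → i ≤ 2 → 1 ≤ j → j ≤ m →
      br (eN i) (yN j) = if i = 1 then -yN (j + 1) else 0) (b : V) :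
    br (eN 1) b ∈ filtration eN yN 1 := by
  refine apply_mem_of_generators hspan ?_ b
  rintro _ (rfl | rfl | ⟨j, ⟨hj1, hjm⟩, rfl⟩)
  · simp [hee 1 1]
  · simp [hee 1 2]
  · rw [hey 1 j le_rfl (by omega) hj1 hjm, if_pos rfl]
    exact neg_mem (yN_mem_filtration (by omega))

theorem apply_yN_mem_filtration (hspan : Submodule.span ℂ (generators m eN yN) = ⊤)
    (hyN0 : ∀ k, ¬(1 ≤ k ∧ k ≤ m) → yN k = 0)
    (hye : ∀ j i, 1 ≤ j → j ≤ m → 1 ≤ i → i ≤ 2 →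
      br (yN j) (eN i) = if i = 1 then yN (j + 1) else 0)
    (hyy : ∀ j k, 1 ≤ j → j ≤ m → 1 ≤ k → k ≤ m →
      br (yN j) (yN k) = if j + k = m + 1 then ((-1 : ℂ) ^ (k + 1)) • eN 2 else 0)
    (j : ℕ) (b : V) : br (yN j) b ∈ filtration eN yN j := by
  by_cases hj : 1 ≤ j ∧ j ≤ m
  swap
  · simp [hyN0 j hj]
  refine apply_mem_of_generators hspan ?_ b
  rintro _ (rfl | rfl | ⟨k, ⟨hk1, hkm⟩, rfl⟩)
  · rw [hye j 1 hj.1 hj.2 le_rfl (by omega), if_pos rfl]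
    exact yN_mem_filtration (Nat.lt_succ_self j)
  · simp [hye j 2 hj.1 hj.2]
  · rw [hyy j k hj.1 hj.2 hk1 hkm]
    split_ifs
    · exact Submodule.smul_mem _ _ (eN_two_mem_filtration j)
    · exact zero_mem _

theorem apply_mem_filtration_succ (he₂ : ∀ b, br (eN 2) b = 0)
    (hy : ∀ j b, br (yN j) b ∈ filtration eN yN j) {n : ℕ} {a : V}
    (ha : a ∈ filtration eN yN n) (b : V) : br a b ∈ filtration eN yN (n + 1) := by
  refine br.apply_apply_mem_of_mem_span (t := {b}) ?_ ha (Submodule.mem_span_singleton_self b)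
  rintro _ (rfl | ⟨j, hj, rfl⟩) _ rfl
  · simp [he₂]
  · exact filtration_anti hj (hy j _)

theorem apply_mem_filtration_one (hspan : Submodule.span ℂ (generators m eN yN) = ⊤)
    (he₁ : ∀ b, br (eN 1) b ∈ filtration eN yN 1) (he₂ : ∀ b, br (eN 2) b = 0)
    (hy : ∀ j b, br (yN j) b ∈ filtration eN yN j) (a b : V) :
    br a b ∈ filtration eN yN 1 := by
  refine br.apply_apply_mem_of_mem_span (t := {b}) ?_ (hspan ▸ Submodule.mem_top)
    (Submodule.mem_span_singleton_self b)
  rintro _ (rfl | rfl | ⟨j, ⟨hj1, -⟩, rfl⟩) _ rfl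
  · exact he₁ _
  · simp [he₂]
  · exact filtration_anti hj1 (hy j _)

theorem apply_eq_zero_of_mem_filtration (he₂ : ∀ b, br (eN 2) b = 0)
    (hyN0 : ∀ k, ¬(1 ≤ k ∧ k ≤ m) → yN k = 0) {a : V} (ha : a ∈ filtration eN yN m)
    (b : V) : br a b = 0 := by
  rw [← Submodule.mem_bot ℂ]
  refine br.apply_apply_mem_of_mem_span (t := {b}) ?_ ha (Submodule.mem_span_singleton_self b)
  rintro _ (rfl | ⟨j, hj, rfl⟩) _ rfl
  · simp [he₂]
  · simp [hyN0 j (by simp only [Set.mem_Ioi] at hj; omega)]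

theorem yN_succ_mem_leibLCS
    (hye : ∀ j i, 1 ≤ j → j ≤ m → 1 ≤ i → i ≤ 2 →
      br (yN j) (eN i) = if i = 1 then yN (j + 1) else 0) :
    ∀ k, k < m → yN (k + 1) ∈ leibLCS br k
  | 0, _ => Submodule.mem_top
  | k + 1, hk => by
    have h := apply_mem_leibLCS_succ (yN_succ_mem_leibLCS hye k (by omega)) (eN 1)
    rwa [hye (k + 1) 1 (by omega) (by omega) le_rfl (by omega), if_pos rfl] at h

theorem eN_two_mem_leibLCS (hm : 1 ≤ m)
    (hye : ∀ j i, 1 ≤ j → j ≤ m → 1 ≤ i → i ≤ 2 →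
      br (yN j) (eN i) = if i = 1 then yN (j + 1) else 0)
    (hyy : ∀ j k, 1 ≤ j → j ≤ m → 1 ≤ k → k ≤ m →
      br (yN j) (yN k) = if j + k = m + 1 then ((-1 : ℂ) ^ (k + 1)) • eN 2 else 0) :
    eN 2 ∈ leibLCS br m := by
  have hym := yN_succ_mem_leibLCS hye (m - 1) (by omega)
  rw [Nat.sub_add_cancel hm] at hym
  have h := apply_mem_leibLCS_succ hym (yN 1)
  rwa [Nat.sub_add_cancel hm, hyy m 1 hm le_rfl le_rfl hm, if_pos rfl, neg_one_sq,
    one_smul] at h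

end N2m

open N2m in
/-- The Lie superalgebra N_{2,m} (m odd, m ≥ 3) is nilpotent of nilindex exactly m+2:
N^{m+2} = 0 and N^{m+1} ≠ 0. -/
theorem statement5 {V : Type*} [AddCommGroup V] [Module ℂ V]
    (m : ℕ) (hm3 : 3 ≤ m)
    (bas : Module.Basis (Fin 2 ⊕ Fin m) ℂ V)
    (eN yN : ℕ → V)
    (heN : ∀ k (h : 1 ≤ k ∧ k ≤ 2), eN k = bas (Sum.inl ⟨k - 1, by omega⟩))
    (hyN : ∀ k (h : 1 ≤ k ∧ k ≤ m), yN k = bas (Sum.inr ⟨k - 1, by omega⟩))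
    (hyN0 : ∀ k, ¬(1 ≤ k ∧ k ≤ m) → yN k = 0)
    (br : V →ₗ[ℂ] V →ₗ[ℂ] V)
    (hee : ∀ i j, 1 ≤ i → i ≤ 2 → 1 ≤ j → j ≤ 2 → br (eN i) (eN j) = 0)
    (hey : ∀ i j, 1 ≤ i → i ≤ 2 → 1 ≤ j → j ≤ m →
      br (eN i) (yN j) = if i = 1 then -yN (j + 1) else 0)
    (hye : ∀ j i, 1 ≤ j → j ≤ m → 1 ≤ i → i ≤ 2 →
      br (yN j) (eN i) = if i = 1 then yN (j + 1) else 0)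
    (hyy : ∀ j k, 1 ≤ j → j ≤ m → 1 ≤ k → k ≤ m →
      br (yN j) (yN k) = if j + k = m + 1 then ((-1 : ℂ) ^ (k + 1)) • eN 2 else 0) :
    leibLCS br (m + 1) = ⊥ ∧ leibLCS br m ≠ ⊥ := by
  have hm : 1 ≤ m := by omega
  have hspan := span_generators_eq_top bas (heN 1 (by omega)).symm (heN 2 (by omega)).symm
    fun j => (hyN (j + 1) (by omega)).symm
  have he₂ := apply_eN_two_eq_zero hspan hee hey
  have hy := apply_yN_mem_filtration hspan hyN0 hye hyy
  have hF₁ := apply_mem_filtration_one hspan (apply_eN_one_mem_filtration hspan hee hey) he₂ hy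
  have hlcs := leibLCS_succ_le_of_filtration _ hF₁
    (fun _ _ b ha => apply_mem_filtration_succ he₂ hy ha b) (m - 1)
  rw [Nat.sub_add_cancel hm] at hlcs
  refine ⟨le_bot_iff.mp (leibLCS_succ_le_iff.mpr fun a ha b => ?_), fun hbot => ?_⟩
  · exact (Submodule.mem_bot ℂ).mpr (apply_eq_zero_of_mem_filtration he₂ hyN0 (hlcs ha) b)
  · have he₂_mem := eN_two_mem_leibLCS hm hye hyy
    rw [hbot, Submodule.mem_bot, heN 2 (by omega)] at he₂_mem
    exact bas.ne_zero _ he₂_mem
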